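/- For every n ≥ 0 and every function u : V* → ℝ, there exists a unique function ū_n : V* → ℝ such that ū_n(x) = u(x) for every x ∈ V_n and E_{n+p}(ū_n, ū_n) = E_n(u,u) for every p ≥ 0. -/

import Mathlib

open scoped Classical
open Real Set

noncomputable section

abbrev Pt : Type := ℝ × ℝ

/-- The three corners of the unit triangle. -/
def sierA : Fin 3 → Pt
  | 0 => (0, 0)
  | 1 => (1 / 2, Real.sqrt 3 / 2)
  | 2 => (1, 0)

/-- The three contractions `φᵢ(x) = (x + aᵢ)/2`. -/
def ctr (i : Fin 3) (x : Pt) : Pt :=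
  ((x.1 + (sierA i).1) / 2, (x.2 + (sierA i).2) / 2)

/-- The vertex sets `V n`. -/
def V : ℕ → Finset Pt
  | 0 => {sierA 0, sierA 1, sierA 2}
  | n + 1 => (V n).image (ctr 0) ∪ (V n).image (ctr 1) ∪ (V n).image (ctr 2)

/-- The (ordered) edge sets: `(x, y) ∈ Ed n` iff `{x,y} ∈ E_n`; each undirected
edge appears with both orientations. -/
def Ed : ℕ → Finset (Pt × Pt)
  | 0 => (V 0 ×ˢ V 0).filter fun p => p.1 ≠ p.2
  | n + 1 => Finset.univ.biUnion fun i : Fin 3 => (Ed n).image fun p => (ctr i p.1, ctr i p.2)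

/-- `V* = ⋃ n, V n`. -/
def Vstar : Set Pt := ⋃ n, (V n : Set Pt)

/-- The level-`n` energy `E_n(u,u) = (5/3)^n Σ_{{x,y} ∈ E_n} (u y - u x)²`
(each undirected edge counted once, whence the division by 2). -/
def En (n : ℕ) (u : Pt → ℝ) : ℝ :=
  (5 / 3 : ℝ) ^ n * (∑ p ∈ Ed n, (u p.2 - u p.1) ^ 2) / 2

/-- The discrete Laplacian `Δ_n u (x) = 5^n Σ_{y ∼ₙ x} (u y - u x)`. -/
def lap (n : ℕ) (u : Pt → ℝ) (x : Pt) : ℝ :=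
  (5 : ℝ) ^ n * ∑ p ∈ (Ed n).filter (fun p => p.1 = x), (u p.2 - u p.1)

/-! Two cells `ctr i (V m)` and `ctr j (V m)` meet only in the point `ctr i (sierA j)`, so the
level-`m + 1` edge sum of `f` is the sum over `i` of the level-`m` edge sums of `f ∘ ctr i`. On a
single cell, `edgeSum 1 f - 3/5 * edgeSum 0 f` is a positive definite quadratic form in the
deviations of the three midpoint values from the "2-2-1" averages `harmonicValue`. By
self-similarity `3/5 * edgeSum m f ≤ edgeSum (m + 1) f` at every level, with equality (that is,
`En (m + 1) f = En m f`) iff `f` follows the 2-2-1 rule in every `m`-cell; this pins `f` down on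
`V (m + 1)` given `f` on `V m`. Conversely, such extensions on the three cells agree at the shared
corners and glue, and iterating them from `V n` gives a compatible sequence of functions whose
common value is the required one. -/

open Finset

lemma sierA_injective : Function.Injective sierA := by
  have h3 : Real.sqrt 3 ≠ 0 := by positivity
  intro i j h
  fin_cases i <;> fin_cases j <;> simp_all [sierA]

lemma ctr_injective (i : Fin 3) : Function.Injective (ctr i) := fun x y h => by
  simp only [ctr, Prod.mk.injEq] at h
  exact Prod.ext (by linarith [h.1]) (by linarith [h.2])

lemma ctr_sierA_self (i : Fin 3) : ctr i (sierA i) = sierA i := by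
  fin_cases i <;> simp [ctr, sierA]

lemma ctr_sierA_comm (i j : Fin 3) : ctr i (sierA j) = ctr j (sierA i) :=
  Prod.ext (by simp only [ctr]; ring) (by simp only [ctr]; ring)

lemma mem_V_zero {x : Pt} : x ∈ V 0 ↔ ∃ i, sierA i = x := by
  simp [V, Fin.exists_fin_succ, eq_comm]

lemma mem_V_succ {m : ℕ} {x : Pt} : x ∈ V (m + 1) ↔ ∃ i, ∃ y ∈ V m, ctr i y = x := by
  simp [V, Fin.exists_fin_succ]

lemma ctr_mem_V {m : ℕ} {y : Pt} (i : Fin 3) (hy : y ∈ V m) : ctr i y ∈ V (m + 1) :=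
  mem_V_succ.2 ⟨i, y, hy, rfl⟩

lemma sierA_mem_V (m : ℕ) (k : Fin 3) : sierA k ∈ V m := by
  induction m with
  | zero => exact mem_V_zero.2 ⟨k, rfl⟩
  | succ m ih => simpa only [ctr_sierA_self] using ctr_mem_V k ih

lemma V_monotone : Monotone V := by
  refine monotone_nat_of_le_succ fun m => ?_
  induction m with
  | zero =>
    intro x hx
    obtain ⟨i, rfl⟩ := mem_V_zero.1 hx
    exact sierA_mem_V 1 i
  | succ m ih =>
    intro x hx
    obtain ⟨i, y, hy, rfl⟩ := mem_V_succ.1 hx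
    exact ctr_mem_V i (ih hy)

def bary : Fin 3 → Pt → ℝ
  | 0 => fun x => Real.sqrt 3 * (1 - x.1) - x.2
  | 1 => fun x => 2 * x.2
  | 2 => fun x => Real.sqrt 3 * x.1 - x.2

lemma sum_bary (x : Pt) : ∑ k, bary k x = Real.sqrt 3 := by
  simp only [Fin.sum_univ_three, bary]
  ring

lemma bary_ctr (i j : Fin 3) (x : Pt) :
    bary j (ctr i x) = (bary j x + if j = i then Real.sqrt 3 else 0) / 2 := by
  fin_cases i <;> fin_cases j <;> simp [bary, ctr, sierA] <;> ring

lemma bary_sierA (i j : Fin 3) : bary i (sierA j) = if i = j then Real.sqrt 3 else 0 := by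
  fin_cases i <;> fin_cases j <;> simp [bary, sierA] <;> ring

lemma bary_nonneg_of_mem_V {m : ℕ} {x : Pt} (hx : x ∈ V m) (k : Fin 3) : 0 ≤ bary k x := by
  induction m generalizing x with
  | zero =>
    obtain ⟨i, rfl⟩ := mem_V_zero.1 hx
    rw [bary_sierA]
    split_ifs <;> positivity
  | succ m ih =>
    obtain ⟨i, y, hy, rfl⟩ := mem_V_succ.1 hx
    rw [bary_ctr]
    have := ih hy
    split_ifs <;> positivity

lemma bary_le_of_mem_V {m : ℕ} {x : Pt} (hx : x ∈ V m) (k : Fin 3) : bary k x ≤ Real.sqrt 3 :=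
  sum_bary x ▸ single_le_sum (fun k _ => bary_nonneg_of_mem_V hx k) (mem_univ k)

lemma eq_of_bary_eq {i j : Fin 3} (hij : i ≠ j) {x y : Pt}
    (hi : bary i x = bary i y) (hj : bary j x = bary j y) : x = y := by
  have h3 : 0 < Real.sqrt 3 := by positivity
  fin_cases i <;> fin_cases j <;> simp only [bary] at hi hj <;> simp at hij <;>
    refine Prod.ext ?_ ?_ <;>
    first | linarith | exact mul_left_cancel₀ h3.ne' (by linarith)

lemma eq_sierA_of_ctr_eq_ctr {m : ℕ} {i j : Fin 3} (hij : i ≠ j) {x y : Pt}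
    (hx : x ∈ V m) (hy : y ∈ V m) (h : ctr i x = ctr j y) : x = sierA j ∧ y = sierA i := by
  have hi := congrArg (bary i) h
  have hj := congrArg (bary j) h
  simp only [bary_ctr, if_neg hij, if_neg hij.symm, ↓reduceIte] at hi hj
  have hxi := bary_nonneg_of_mem_V hx i
  have hxj := bary_le_of_mem_V hx j
  have hyi := bary_le_of_mem_V hy i
  have hyj := bary_nonneg_of_mem_V hy j
  constructor <;> refine eq_of_bary_eq hij ?_ ?_ <;>
    simp only [bary_sierA, if_neg hij, if_neg hij.symm, ↓reduceIte] <;> linarith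

lemma mem_Ed_succ {m : ℕ} {p : Pt × Pt} :
    p ∈ Ed (m + 1) ↔ ∃ i, ∃ q ∈ Ed m, (ctr i q.1, ctr i q.2) = p := by
  simp [Ed]

lemma mem_V_of_mem_Ed {m : ℕ} {p : Pt × Pt} (hp : p ∈ Ed m) : p.1 ∈ V m ∧ p.2 ∈ V m := by
  induction m generalizing p with
  | zero => exact (mem_product.1 (mem_filter.1 hp).1)
  | succ m ih =>
    obtain ⟨i, q, hq, rfl⟩ := mem_Ed_succ.1 hp
    exact ⟨ctr_mem_V i (ih hq).1, ctr_mem_V i (ih hq).2⟩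

lemma ne_of_mem_Ed {m : ℕ} {p : Pt × Pt} (hp : p ∈ Ed m) : p.1 ≠ p.2 := by
  induction m generalizing p with
  | zero => exact (mem_filter.1 hp).2
  | succ m ih =>
    obtain ⟨i, q, hq, rfl⟩ := mem_Ed_succ.1 hp
    exact (ih hq).imp fun h => ctr_injective i h

def edgeSum (m : ℕ) (f : Pt → ℝ) : ℝ := ∑ p ∈ Ed m, (f p.2 - f p.1) ^ 2

lemma En_eq_edgeSum (m : ℕ) (f : Pt → ℝ) : En m f = (5 / 3) ^ m * edgeSum m f / 2 := rfl

lemma edgeSum_congr {m : ℕ} {f g : Pt → ℝ} (h : EqOn f g (V m)) : edgeSum m f = edgeSum m g :=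
  sum_congr rfl fun p hp => by rw [h (mem_V_of_mem_Ed hp).1, h (mem_V_of_mem_Ed hp).2]

lemma En_congr {m : ℕ} {f g : Pt → ℝ} (h : EqOn f g (V m)) : En m f = En m g := by
  rw [En_eq_edgeSum, En_eq_edgeSum, edgeSum_congr h]

lemma edgeSum_zero (f : Pt → ℝ) :
    edgeSum 0 f = ∑ i, ∑ j, (f (sierA j) - f (sierA i)) ^ 2 := by
  have hV : V 0 = Finset.univ.image sierA := by ext; simp [mem_V_zero]
  rw [edgeSum, Ed, sum_filter_of_ne, sum_product, hV, sum_image sierA_injective.injOn]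
  · exact sum_congr rfl fun i _ => sum_image sierA_injective.injOn
  · exact fun p _ h hp => h (by simp [hp])

lemma edgeSum_succ (m : ℕ) (f : Pt → ℝ) :
    edgeSum (m + 1) f = ∑ i, edgeSum m (f ∘ ctr i) := by
  have hdisj : ((Finset.univ : Finset (Fin 3)) : Set (Fin 3)).PairwiseDisjoint
      fun i => (Ed m).image fun p => (ctr i p.1, ctr i p.2) := by
    intro i _ j _ hij
    refine disjoint_left.2 fun e hi hj => ?_
    obtain ⟨p, hp, rfl⟩ := mem_image.1 hi
    obtain ⟨q, hq, hqp⟩ := mem_image.1 hj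
    simp only [Prod.mk.injEq] at hqp
    have h1 := eq_sierA_of_ctr_eq_ctr hij (mem_V_of_mem_Ed hp).1 (mem_V_of_mem_Ed hq).1 hqp.1.symm
    have h2 := eq_sierA_of_ctr_eq_ctr hij (mem_V_of_mem_Ed hp).2 (mem_V_of_mem_Ed hq).2 hqp.2.symm
    exact ne_of_mem_Ed hp (h1.1.trans h2.1.symm)
  rw [edgeSum, Ed, sum_biUnion hdisj]
  refine sum_congr rfl fun i _ => sum_image fun p _ q _ h => ?_
  simp only [Prod.mk.injEq] at h
  exact Prod.ext (ctr_injective i h.1) (ctr_injective i h.2)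

def harmonicValue (f : Pt → ℝ) (i j : Fin 3) : ℝ :=
  if i = j then f (sierA i) else (f (sierA i) + f (sierA j) + ∑ k, f (sierA k)) / 5

lemma harmonicValue_self (f : Pt → ℝ) (i : Fin 3) : harmonicValue f i i = f (sierA i) :=
  if_pos rfl

lemma harmonicValue_comm (f : Pt → ℝ) (i j : Fin 3) :
    harmonicValue f i j = harmonicValue f j i := by
  rcases eq_or_ne i j with rfl | h
  · rfl
  · simp only [harmonicValue, if_neg h, if_neg h.symm, add_comm (f (sierA i))]

lemma harmonicValue_congr {f g : Pt → ℝ} (h : ∀ k, f (sierA k) = g (sierA k)) :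
    harmonicValue f = harmonicValue g := by
  ext i j
  simp only [harmonicValue, h]

def harmonicDefect (f : Pt → ℝ) (i j : Fin 3) : ℝ := f (ctr i (sierA j)) - harmonicValue f i j

lemma harmonicDefect_self (f : Pt → ℝ) (i : Fin 3) : harmonicDefect f i i = 0 := by
  rw [harmonicDefect, ctr_sierA_self, harmonicValue_self, sub_self]

lemma harmonicDefect_comm (f : Pt → ℝ) (i j : Fin 3) :
    harmonicDefect f i j = harmonicDefect f j i := by
  rw [harmonicDefect, harmonicDefect, ctr_sierA_comm, harmonicValue_comm]

lemma edgeSum_one_eq (f : Pt → ℝ) :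
    edgeSum 1 f = 3 / 5 * edgeSum 0 f +
      2 * ((harmonicDefect f 0 1 - harmonicDefect f 1 2) ^ 2
        + (harmonicDefect f 1 2 - harmonicDefect f 2 0) ^ 2
        + (harmonicDefect f 2 0 - harmonicDefect f 0 1) ^ 2
        + 2 * (harmonicDefect f 0 1 ^ 2 + harmonicDefect f 1 2 ^ 2
          + harmonicDefect f 2 0 ^ 2)) := by
  simp only [edgeSum_succ, edgeSum_zero, harmonicDefect, harmonicValue, Fin.sum_univ_three,
    Function.comp_apply, ctr_sierA_self, ctr_sierA_comm 1 0, ctr_sierA_comm 2 1, ctr_sierA_comm 0 2]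
  simp only [Fin.isValue, Fin.reduceEq, ↓reduceIte]
  ring

lemma eq_zero_of_defect_form_eq_zero {a b c : ℝ}
    (h : (a - b) ^ 2 + (b - c) ^ 2 + (c - a) ^ 2 + 2 * (a ^ 2 + b ^ 2 + c ^ 2) = 0) :
    a = 0 ∧ b = 0 ∧ c = 0 := by
  refine ⟨?_, ?_, ?_⟩ <;>
    nlinarith [sq_nonneg (a - b), sq_nonneg (b - c), sq_nonneg (c - a), sq_nonneg a, sq_nonneg b,
      sq_nonneg c]

lemma forall_harmonicDefect_eq_zero {f : Pt → ℝ} (h01 : harmonicDefect f 0 1 = 0)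
    (h12 : harmonicDefect f 1 2 = 0) (h20 : harmonicDefect f 2 0 = 0) (i j : Fin 3) :
    harmonicDefect f i j = 0 := by
  fin_cases i <;> fin_cases j <;>
    first | exact harmonicDefect_self f _ | assumption | (rw [harmonicDefect_comm]; assumption)

def IsHarmonicExt (m : ℕ) (f : Pt → ℝ) : Prop := edgeSum (m + 1) f = 3 / 5 * edgeSum m f

lemma isHarmonicExt_zero_iff {f : Pt → ℝ} :
    IsHarmonicExt 0 f ↔ ∀ i j, f (ctr i (sierA j)) = harmonicValue f i j := by
  have hdefect : (∀ i j, f (ctr i (sierA j)) = harmonicValue f i j) ↔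
      ∀ i j, harmonicDefect f i j = 0 := by
    simp only [harmonicDefect, sub_eq_zero]
  rw [hdefect, IsHarmonicExt, edgeSum_one_eq]
  constructor
  · intro h
    obtain ⟨h01, h12, h20⟩ := eq_zero_of_defect_form_eq_zero (a := harmonicDefect f 0 1)
      (b := harmonicDefect f 1 2) (c := harmonicDefect f 2 0) (by linarith)
    exact forall_harmonicDefect_eq_zero h01 h12 h20
  · intro h
    simp only [h]
    ring

lemma three_fifths_mul_edgeSum_le (m : ℕ) (f : Pt → ℝ) :
    3 / 5 * edgeSum m f ≤ edgeSum (m + 1) f := by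
  induction m generalizing f with
  | zero =>
    rw [edgeSum_one_eq]
    exact le_add_of_nonneg_right (by positivity)
  | succ m ih =>
    rw [edgeSum_succ (m + 1), edgeSum_succ m, mul_sum]
    exact sum_le_sum fun i _ => ih _

lemma isHarmonicExt_succ_iff {m : ℕ} {f : Pt → ℝ} :
    IsHarmonicExt (m + 1) f ↔ ∀ i, IsHarmonicExt m (f ∘ ctr i) := by
  rw [IsHarmonicExt, edgeSum_succ (m + 1), edgeSum_succ m, mul_sum, eq_comm,
    sum_eq_sum_iff_of_le fun i _ => three_fifths_mul_edgeSum_le m _]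
  simp [IsHarmonicExt, eq_comm]

lemma isHarmonicExt_congr {m : ℕ} {f g : Pt → ℝ} (h : EqOn f g (V (m + 1))) :
    IsHarmonicExt m f ↔ IsHarmonicExt m g := by
  rw [IsHarmonicExt, IsHarmonicExt, edgeSum_congr h,
    edgeSum_congr (h.mono (coe_subset.2 (V_monotone m.le_succ)))]

lemma eqOn_V_succ_of_isHarmonicExt {m : ℕ} {f g : Pt → ℝ} (hfg : EqOn f g (V m))
    (hf : IsHarmonicExt m f) (hg : IsHarmonicExt m g) : EqOn f g (V (m + 1)) := by
  induction m generalizing f g with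
  | zero =>
    intro x hx
    obtain ⟨i, y, hy, rfl⟩ := mem_V_succ.1 hx
    obtain ⟨j, rfl⟩ := mem_V_zero.1 hy
    rw [isHarmonicExt_zero_iff.1 hf, isHarmonicExt_zero_iff.1 hg,
      harmonicValue_congr fun k => hfg (sierA_mem_V 0 k)]
  | succ m ih =>
    intro x hx
    obtain ⟨i, y, hy, rfl⟩ := mem_V_succ.1 hx
    exact ih (f := f ∘ ctr i) (g := g ∘ ctr i) (fun z hz => hfg (ctr_mem_V i hz))
      (isHarmonicExt_succ_iff.1 hf i) (isHarmonicExt_succ_iff.1 hg i) hy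

lemma exists_comp_ctr_eqOn (m : ℕ) (f : Fin 3 → Pt → ℝ)
    (hf : ∀ i j, f i (sierA j) = f j (sierA i)) :
    ∃ w : Pt → ℝ, ∀ i, EqOn (w ∘ ctr i) (f i) (V m) := by
  refine ⟨fun x => if h : ∃ i, ∃ y ∈ V m, ctr i y = x then f h.choose h.choose_spec.choose
    else 0, fun i y hy => ?_⟩
  have h : ∃ j, ∃ z ∈ V m, ctr j z = ctr i y := ⟨i, y, hy, rfl⟩
  have key : ∀ j, ∀ z ∈ V m, ctr j z = ctr i y → f j z = f i y := by
    intro j z hz hzy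
    rcases eq_or_ne j i with rfl | hji
    · rw [ctr_injective j hzy]
    · obtain ⟨rfl, rfl⟩ := eq_sierA_of_ctr_eq_ctr hji hz hy hzy
      exact hf j i
  simp only [Function.comp_apply, dif_pos h]
  exact key _ _ h.choose_spec.choose_spec.1 h.choose_spec.choose_spec.2

lemma exists_isHarmonicExt (m : ℕ) (v : Pt → ℝ) :
    ∃ w, EqOn w v (V m) ∧ IsHarmonicExt m w := by
  induction m generalizing v with
  | zero =>
    obtain ⟨w, hw⟩ := exists_comp_ctr_eqOn 0
      (fun i => Function.extend sierA (harmonicValue v i) 0) fun i j => by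
        simp only [sierA_injective.extend_apply, harmonicValue_comm]
    have hwv : ∀ i j, w (ctr i (sierA j)) = harmonicValue v i j := fun i j =>
      (hw i (sierA_mem_V 0 j)).trans (sierA_injective.extend_apply _ _ _)
    have hwv₀ : EqOn w v (V 0) := by
      intro x hx
      obtain ⟨i, rfl⟩ := mem_V_zero.1 hx
      simpa only [ctr_sierA_self, harmonicValue_self] using hwv i i
    refine ⟨w, hwv₀, isHarmonicExt_zero_iff.2 fun i j => ?_⟩
    rw [hwv, harmonicValue_congr fun k => hwv₀ (sierA_mem_V 0 k)]
  | succ m ih =>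
    choose w hwv hw using fun i => ih (v ∘ ctr i)
    obtain ⟨W, hW⟩ := exists_comp_ctr_eqOn (m + 1) w fun i j => by
      rw [hwv i (sierA_mem_V m j), hwv j (sierA_mem_V m i), Function.comp_apply,
        Function.comp_apply, ctr_sierA_comm]
    refine ⟨W, fun x hx => ?_,
      isHarmonicExt_succ_iff.2 fun i => (isHarmonicExt_congr (hW i)).2 (hw i)⟩
    obtain ⟨i, y, hy, rfl⟩ := mem_V_succ.1 hx
    exact (hW i (V_monotone m.le_succ hy)).trans (hwv i hy)

lemma exists_eqOn_of_eqOn_succ {α β : Type*} {s : ℕ → Set α} (hs : Monotone s)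
    (g : ℕ → α → β) (hg : ∀ p, EqOn (g (p + 1)) (g p) (s p)) :
    ∃ w : α → β, ∀ p, EqOn w (g p) (s p) := by
  have stable : ∀ p q, p ≤ q → EqOn (g q) (g p) (s p) := by
    intro p q hpq
    induction q, hpq using Nat.le_induction with
    | base => exact fun _ _ => rfl
    | succ q hpq ih => exact ((hg q).mono (hs hpq)).trans ih
  refine ⟨fun x => if h : ∃ p, x ∈ s p then g h.choose x else g 0 x, fun p x hx => ?_⟩
  have h : ∃ p, x ∈ s p := ⟨p, hx⟩
  simp only [dif_pos h]
  exact (stable _ _ (le_max_left _ p) h.choose_spec).symm.trans (stable _ _ (le_max_right _ p) hx)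

lemma exists_forall_isHarmonicExt (n : ℕ) (u : Pt → ℝ) :
    ∃ w, EqOn w u (V n) ∧ ∀ p, IsHarmonicExt (n + p) w := by
  choose ext hext_eq hext using exists_isHarmonicExt
  let g : ℕ → Pt → ℝ := fun p => Nat.rec u (fun p gp => ext (n + p) gp) p
  obtain ⟨w, hw⟩ := exists_eqOn_of_eqOn_succ (s := fun p => (V (n + p) : Set Pt))
    (fun p q hpq => coe_subset.2 (V_monotone (Nat.add_le_add_left hpq n))) g
    fun p => hext_eq (n + p) (g p)
  exact ⟨w, hw 0, fun p => (isHarmonicExt_congr (hw (p + 1))).2 (hext (n + p) (g p))⟩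

lemma isHarmonicExt_iff_En {m : ℕ} {f : Pt → ℝ} :
    IsHarmonicExt m f ↔ En (m + 1) f = En m f := by
  have hpow : (5 / 3 : ℝ) ^ m ≠ 0 := by positivity
  rw [IsHarmonicExt, En_eq_edgeSum, En_eq_edgeSum, pow_succ]
  constructor
  · intro h
    rw [h]
    ring
  · intro h
    have := mul_left_cancel₀ hpow (by linear_combination 2 * h :
      (5 / 3 : ℝ) ^ m * (5 / 3 * edgeSum (m + 1) f) = (5 / 3) ^ m * edgeSum m f)
    linarith

lemma En_add_of_isHarmonicExt {n : ℕ} {f : Pt → ℝ} (h : ∀ p, IsHarmonicExt (n + p) f)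
    (p : ℕ) : En (n + p) f = En n f := by
  induction p with
  | zero => rfl
  | succ p ih => exact (isHarmonicExt_iff_En.1 (h p)).trans ih

lemma eqOn_V_add_of_isHarmonicExt {n : ℕ} {f g : Pt → ℝ} (hfg : EqOn f g (V n))
    (hf : ∀ p, IsHarmonicExt (n + p) f) (hg : ∀ p, IsHarmonicExt (n + p) g) (p : ℕ) :
    EqOn f g (V (n + p)) := by
  induction p with
  | zero => exact hfg
  | succ p ih => exact eqOn_V_succ_of_isHarmonicExt ih (hf p) (hg p)

/-- For every `n ≥ 0` and every `u : V* → ℝ` there is a unique function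
`ū_n : V* → ℝ` (unique up to its values on `V*`) that agrees with `u` on `V_n`
and satisfies `E_{n+p}(ū_n, ū_n) = E_n(u,u)` for every `p ≥ 0`. -/
theorem harmonic_extension_exists_unique (n : ℕ) (u : Pt → ℝ) :
    ∃ ub : Pt → ℝ,
      (∀ x ∈ (V n : Set Pt), ub x = u x) ∧
      (∀ p : ℕ, En (n + p) ub = En n u) ∧
      ∀ ub' : Pt → ℝ,
        (∀ x ∈ (V n : Set Pt), ub' x = u x) →
        (∀ p : ℕ, En (n + p) ub' = En n u) →
        ∀ x ∈ Vstar, ub' x = ub x := by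
  obtain ⟨ub, hagree, hharm⟩ := exists_forall_isHarmonicExt n u
  refine ⟨ub, hagree, fun p => (En_add_of_isHarmonicExt hharm p).trans (En_congr hagree),
    fun ub' hagree' hE' x hx => ?_⟩
  have hharm' : ∀ p, IsHarmonicExt (n + p) ub' := fun p =>
    isHarmonicExt_iff_En.2 ((hE' (p + 1)).trans (hE' p).symm)
  obtain ⟨m, hm⟩ := mem_iUnion.1 hx
  exact eqOn_V_add_of_isHarmonicExt (EqOn.trans hagree' (EqOn.symm hagree)) hharm' hharm m
    (V_monotone (Nat.le_add_left m n) hm)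

end
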